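/- arXiv:1602.01306 — 2 statements merged into one kernel-verified Lean document; each statement's English description precedes it below -/
import Mathlib

section
/- Let M be a matroid on a finite ground set E that is representable over a field K, and let A ⊆ E. If N is a matroid on E whose bases are exactly the minimum-cardinality members of {A △ B : B a base of M}, then N is representable over K; likewise, if N' is a matroid on E whose bases are exactly the maximum-cardinality members of {A △ B : B a base of M}, then N' is representable over K. (That is, (M*A)_min and (M*A)_max are representable over every field over which M is.) -/
open scoped symmDiff Matroid

namespace PaperMatroid

variable {α : Type}

/-- The contraction `M/C`, defined via duality: `M/C = (M✶ ∖ C)✶`. -/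
def contr (M : Matroid α) (C : Set α) : Matroid α := (M✶ ↾ (M.E \ C))✶

/-- The rank of a set `X`: the size of a largest independent subset of `X`. -/
noncomputable def rkFn (M : Matroid α) (X : Set α) : ℕ :=
  sSup {n : ℕ | ∃ I, M.Indep I ∧ I ⊆ X ∧ n = I.ncard}

/-- `F` is a minimum-cardinality member of the twist family `{A ∆ B : B a base of M}`. -/
def MinTwistMem (M : Matroid α) (A F : Set α) : Prop :=
  (∃ B, M.IsBase B ∧ F = A ∆ B) ∧
    ∀ F', (∃ B, M.IsBase B ∧ F' = A ∆ B) → F.ncard ≤ F'.ncard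

/-- `F` is a maximum-cardinality member of the twist family `{A ∆ B : B a base of M}`. -/
def MaxTwistMem (M : Matroid α) (A F : Set α) : Prop :=
  (∃ B, M.IsBase B ∧ F = A ∆ B) ∧
    ∀ F', (∃ B, M.IsBase B ∧ F' = A ∆ B) → F'.ncard ≤ F.ncard

/-- A circuit of `M`: a minimal dependent set. -/
def IsCircuit (M : Matroid α) (C : Set α) : Prop :=
  C ⊆ M.E ∧ ¬ M.Indep C ∧ ∀ X, X ⊂ C → M.Indep X

/-- The circuit space of `M`: all disjoint unions of circuits (including `∅`). -/
def CircuitSpace (M : Matroid α) : Set (Set α) :=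
  {X | ∃ 𝒞 : Finset (Set α), (∀ C ∈ 𝒞, IsCircuit M C) ∧
        (↑𝒞 : Set (Set α)).Pairwise Disjoint ∧ X = ⋃₀ ↑𝒞}

/-- The bicycle space of `M`: the intersection of the circuit space and the
cocircuit space (the circuit space of the dual). -/
def BicycleSpace (M : Matroid α) : Set (Set α) := CircuitSpace M ∩ CircuitSpace M✶

/-- A matroid is bipartite if every circuit has even cardinality. -/
def Bipartite (M : Matroid α) : Prop := ∀ C, IsCircuit M C → Even C.ncard

/-- A matroid is Eulerian if its ground set is a disjoint union of circuits. -/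
def Eulerian (M : Matroid α) : Prop :=
  ∃ 𝒞 : Finset (Set α), (∀ C ∈ 𝒞, IsCircuit M C) ∧
    (↑𝒞 : Set (Set α)).Pairwise Disjoint ∧ ⋃₀ ↑𝒞 = M.E

/-- Representability of a matroid over a field `K`: there is a map of the ground set
into a `K`-vector space under which a set is independent exactly when its image is
linearly independent. -/
def IsRepresentableOver (M : Matroid α) (K : Type) [Field K] : Prop :=
  ∃ (V : Type) (_ : AddCommGroup V) (_ : Module K V) (φ : α → V),
    ∀ I, I ⊆ M.E → (M.Indep I ↔ LinearIndependent K (I.restrict φ))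

/-- A binary matroid: one representable over `GF(2)`. -/
def Binary (M : Matroid α) : Prop := IsRepresentableOver M (ZMod 2)

/-!
Choosing `B` so that `A ∩ B` is a basis of `A` minimises `|A ∆ B|`, so `(M*A)_min` is the direct
sum of `M ／ A` (on `E \ A`) and `(M ↾ A)✶` (on `A`). Since `A ∆ B = E \ ((E \ A) ∆ B)`,
`(M*A)_max` is the dual of `(M*(E \ A))_min`. Representability over `K` survives restriction,
duality of finite matroids (hence contraction) and direct sums; for duality, send `e` to the unit
vector at `e` in `K^E` modulo the row space of a representation of `M`: the unit vectors of `S`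
stay independent exactly when `E \ S` spans `M`, i.e. when `S` is coindependent.
-/

end PaperMatroid

open Set Submodule Matroid

section LinearAlgebra

variable {K V ι : Type*} [Field K] [AddCommGroup V] [Module K V]

theorem span_le_span_iff_forall_dual {X Y : Set V} :
    span K X ≤ span K Y ↔ ∀ f : Module.Dual K V, Y ⊆ LinearMap.ker f → X ⊆ LinearMap.ker f := by
  rw [← Subspace.dualAnnihilator_le_dualAnnihilator_iff, ← SetLike.coe_subset_coe,
    coe_dualAnnihilator_span, coe_dualAnnihilator_span]
  rfl

variable (K) in
/-- For `V = K^r` this is the row space of the matrix with columns `u i`. -/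
def rowSpace (u : ι → V) : Submodule K (ι → K) :=
  LinearMap.range (LinearMap.pi fun i => Module.Dual.eval K V (u i))

theorem mem_rowSpace_iff {u : ι → V} {x : ι → K} :
    x ∈ rowSpace K u ↔ ∃ f : Module.Dual K V, ∀ i, x i = f (u i) := by
  simp [rowSpace, funext_iff, eq_comm]

theorem linearIndepOn_mkQ_single_iff [Fintype ι] [DecidableEq ι] (u : ι → V) (s : Set ι) :
    LinearIndepOn K (fun i => (rowSpace K u).mkQ (Pi.single i 1)) s ↔
      span K (range u) ≤ span K (u '' sᶜ) := by
  have hcomb (l : ι →₀ K) : Finsupp.linearCombination K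
      (fun i => (rowSpace K u).mkQ (Pi.single i 1)) l = (rowSpace K u).mkQ l := by
    rw [Finsupp.linearCombination_apply, Finsupp.sum_fintype _ _ (by simp)]
    simp_rw [← map_smul, ← map_sum, ← Pi.single_smul', smul_eq_mul, mul_one,
      Finset.univ_sum_single]
  simp_rw [linearIndepOn_iff, hcomb, mkQ_apply, Quotient.mk_eq_zero, mem_rowSpace_iff,
    span_le_span_iff_forall_dual, image_subset_iff, range_subset_iff, Finsupp.mem_supported']
  constructor
  · intro h f hf i
    have hl := h (Finsupp.equivFunOnFinite.symm fun i => f (u i)) (fun i hi => hf hi)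
      ⟨f, fun i => rfl⟩
    simpa using DFunLike.congr_fun hl i
  · rintro h l hl ⟨f, hf⟩
    ext i
    rw [hf, Finsupp.coe_zero, Pi.zero_apply]
    exact h f (fun j hj => by simp [← hf, hl j hj]) i

theorem linearIndepOn_image_val_iff {α : Type*} {E : Set α} {f : α → V} {t : Set E} :
    LinearIndepOn K f (Subtype.val '' t) ↔ LinearIndepOn K (f ∘ Subtype.val) t :=
  ⟨fun h => h.comp_of_image Subtype.val_injective.injOn, fun h => h.image_of_comp _ _⟩

end LinearAlgebra

theorem Set.ncard_symmDiff_add_two_mul_ncard_inter {α : Type*} {A B : Set α} (hA : A.Finite)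
    (hB : B.Finite) : (A ∆ B).ncard + 2 * (A ∩ B).ncard = A.ncard + B.ncard := by
  rw [Set.symmDiff_def, ncard_union_eq disjoint_sdiff_sdiff hA.sdiff hB.sdiff]
  have hA' := ncard_inter_add_ncard_sdiff_eq_ncard A B hA
  have hB' := ncard_inter_add_ncard_sdiff_eq_ncard B A hB
  rw [inter_comm B A] at hB'
  omega

namespace Matroid

section Representation

variable {α K V W : Type*} [Field K] [AddCommGroup V] [Module K V] [AddCommGroup W] [Module K W]
  {M N : Matroid α} {φ : α → V} {I X R : Set α} {e : α}

variable (K) in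
def IsRep (M : Matroid α) (φ : α → V) : Prop :=
  ∀ I ⊆ M.E, M.Indep I ↔ LinearIndepOn K φ I

namespace IsRep

theorem mem_closure_iff_of_indep (h : IsRep K M φ) (hI : M.Indep I) (he : e ∈ M.E) :
    e ∈ M.closure I ↔ φ e ∈ span K (φ '' I) := by
  rw [hI.mem_closure_iff', and_iff_right he, h _ (insert_subset he hI.subset_ground),
    linearIndepOn_insert_iff, and_iff_right ((h _ hI.subset_ground).1 hI)]
  by_cases heI : e ∈ I
  · simpa [heI] using subset_span (mem_image_of_mem φ heI)
  · simp [heI]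

theorem mem_closure_iff (h : IsRep K M φ) (hX : X ⊆ M.E) (he : e ∈ M.E) :
    e ∈ M.closure X ↔ φ e ∈ span K (φ '' X) := by
  obtain ⟨I, hI⟩ := M.exists_isBasis X
  have hspan : span K (φ '' I) = span K (φ '' X) := by
    refine le_antisymm (span_mono (image_mono hI.subset)) (span_le.2 ?_)
    rintro _ ⟨x, hx, rfl⟩
    exact (h.mem_closure_iff_of_indep hI.indep (hX hx)).1 (hI.subset_closure hx)
  rw [← hI.closure_eq_closure, h.mem_closure_iff_of_indep hI.indep he, hspan]

theorem spanning_iff (h : IsRep K M φ) (hX : X ⊆ M.E) :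
    M.Spanning X ↔ span K (φ '' M.E) ≤ span K (φ '' X) := by
  rw [spanning_iff_ground_subset_closure hX, span_le, image_subset_iff]
  exact forall₂_congr fun e he => h.mem_closure_iff hX he

theorem restrict (h : IsRep K M φ) (hR : R ⊆ M.E) : IsRep K (M ↾ R) φ :=
  fun I hI => by rw [restrict_indep_iff, and_iff_left (show I ⊆ R from hI), h I (hI.trans hR)]

theorem disjointSum {ψ : α → W} (hM : IsRep K M φ) (hN : IsRep K N ψ)
    (hdj : Disjoint M.E N.E) :
    IsRep K (M.disjointSum N hdj) fun e => (M.E.indicator φ e, N.E.indicator ψ e) := by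
  set χ : α → V × W := fun e => (M.E.indicator φ e, N.E.indicator ψ e)
  have hχM : EqOn χ (LinearMap.inl K V W ∘ φ) M.E := fun e he => by
    simp [χ, he, hdj.notMem_of_mem_left he]
  have hχN : EqOn χ (LinearMap.inr K V W ∘ ψ) N.E := fun e he => by
    simp [χ, he, hdj.notMem_of_mem_right he]
  intro I hI
  rw [disjointSum_ground_eq] at hI
  have hsplit : I = (I ∩ M.E) ∪ (I ∩ N.E) := by
    rw [← inter_union_distrib_left, inter_eq_left.2 hI]
  rw [disjointSum_indep_iff, and_iff_left hI, hM _ inter_subset_right, hN _ inter_subset_right]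
  have hφ : LinearIndepOn K χ (I ∩ M.E) ↔ LinearIndepOn K φ (I ∩ M.E) := by
    rw [linearIndepOn_congr (hχM.mono inter_subset_right),
      LinearMap.linearIndepOn_iff_of_injOn _ LinearMap.inl_injective.injOn]
  have hψ : LinearIndepOn K χ (I ∩ N.E) ↔ LinearIndepOn K ψ (I ∩ N.E) := by
    rw [linearIndepOn_congr (hχN.mono inter_subset_right),
      LinearMap.linearIndepOn_iff_of_injOn _ LinearMap.inr_injective.injOn]
  have hspan : Disjoint (span K (χ '' (I ∩ M.E))) (span K (χ '' (I ∩ N.E))) := by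
    refine LinearMap.disjoint_inl_inr.mono (span_le.2 ?_) (span_le.2 ?_)
    · rintro _ ⟨e, he, rfl⟩
      exact ⟨φ e, (hχM he.2).symm⟩
    · rintro _ ⟨e, he, rfl⟩
      exact ⟨ψ e, (hχN he.2).symm⟩
  conv_rhs => rw [hsplit]
  rw [linearIndepOn_union_iff (hdj.mono inter_subset_right inter_subset_right), hφ, hψ,
    and_iff_left hspan]

end IsRep

variable (K) in
open Classical in
noncomputable def dualRep (M : Matroid α) (φ : α → V) :
    α → (M.E → K) ⧸ rowSpace K (fun e : M.E => φ e) :=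
  Function.extend Subtype.val (fun e => (rowSpace K _).mkQ (Pi.single e 1)) 0

theorem IsRep.dual [M.Finite] (h : IsRep K M φ) : IsRep K M✶ (dualRep K M φ) := by
  classical
  have := M.ground_finite.fintype
  intro S hS
  rw [dual_ground] at hS
  obtain ⟨t, rfl⟩ : ∃ t : Set M.E, Subtype.val '' t = S := ⟨Subtype.val ⁻¹' S, by simpa⟩
  rw [← coindep_def, coindep_iff_compl_spanning hS, h.spanning_iff sdiff_subset, dualRep,
    linearIndepOn_image_val_iff, Function.extend_comp Subtype.val_injective,
    linearIndepOn_mkQ_single_iff, image_eq_range φ M.E, ← image_image φ Subtype.val tᶜ,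
    image_val_compl]

end Representation

section Bases

variable {α : Type*} {M : Matroid α} {A B B' I J : Set α}

theorem IsBase.ncard_symmDiff_le_iff [M.RankFinite] (hB : M.IsBase B) (hB' : M.IsBase B')
    (hA : A.Finite) : (A ∆ B).ncard ≤ (A ∆ B').ncard ↔ (A ∩ B').ncard ≤ (A ∩ B).ncard := by
  have h := ncard_symmDiff_add_two_mul_ncard_inter hA hB.finite
  have h' := ncard_symmDiff_add_two_mul_ncard_inter hA hB'.finite
  rw [hB.ncard_eq_ncard_of_isBase hB'] at h
  omega

theorem IsBase.isBasis_inter_iff [M.RankFinite] (hB : M.IsBase B) (hA : A ⊆ M.E) :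
    M.IsBasis (A ∩ B) A ↔ ∀ B', M.IsBase B' → (A ∩ B').ncard ≤ (A ∩ B).ncard := by
  have hfin {B'} (hB' : M.IsBase B') : (A ∩ B').Finite := hB'.finite.subset inter_subset_right
  constructor
  · intro hAB B' hB'
    rw [← Nat.cast_le (α := ℕ∞), (hfin hB').cast_ncard_eq, (hfin hB).cast_ncard_eq,
      hAB.encard_eq_eRk]
    exact (hB'.indep.inter_left A).encard_le_eRk_of_subset inter_subset_left
  · intro hmax
    obtain ⟨I, hI⟩ := M.exists_isBasis A
    obtain ⟨B₀, hB₀, hIB₀⟩ := hI.indep.exists_isBase_superset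
    refine (hB.indep.inter_left A).isBasis_of_eRk_ge (hfin hB) inter_subset_left ?_
    rw [(hB.indep.inter_left A).eRk_eq_encard, ← hI.encard_eq_eRk]
    calc I.encard ≤ (A ∩ B₀).encard := encard_le_encard (subset_inter hI.subset hIB₀)
      _ ≤ (A ∩ B).encard := by
        rw [← (hfin hB₀).cast_ncard_eq, ← (hfin hB).cast_ncard_eq]
        exact_mod_cast hmax B₀ hB₀

theorem IsBase.contract_isBase_sdiff (hB : M.IsBase B) (hI : M.IsBasis I A) (hIB : I ⊆ B) :
    (M ／ A).IsBase (B \ A) := by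
  have h := hB.isBasis_ground.contract_isBasis hI
    (hB.indep.subset (union_subset sdiff_subset hIB))
  rwa [← contract_ground, isBasis_ground_iff] at h

theorem IsBasis.contract_isBase_iff (hI : M.IsBasis I A) :
    (M ／ A).IsBase J ↔ M.IsBase (J ∪ I) ∧ Disjoint J A := by
  constructor
  · intro hJ
    have hJA : Disjoint J A := (subset_sdiff.1 hJ.subset_ground).2
    obtain ⟨B, hB, hJIB⟩ := (hI.contract_indep_iff.1 hJ.indep).1.exists_isBase_superset
    have hJB : J = B \ A := hJ.eq_of_subset_isBase (hB.contract_isBase_sdiff hI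
      (subset_union_right.trans hJIB)) (subset_sdiff.2 ⟨subset_union_left.trans hJIB, hJA⟩)
    have hIB : I = A ∩ B := hI.eq_of_subset_indep (hB.indep.inter_left A)
      (subset_inter hI.subset (subset_union_right.trans hJIB)) inter_subset_left
    rw [hJB, hIB, inter_comm, sdiff_union_inter]
    exact ⟨hB, disjoint_sdiff_left⟩
  · rintro ⟨hB, hJA⟩
    have h := hB.contract_isBase_sdiff hI subset_union_right
    rwa [union_sdiff_distrib, sdiff_eq_empty.2 hI.subset, union_empty, hJA.sdiff_eq_left] at h

end Bases

end Matroid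

namespace PaperMatroid

variable {α : Type}

section Twist

variable {K : Type} [Field K] {M N : Matroid α} {A F X : Set α}

theorem IsRepresentableOver.dual [M.Finite] (h : IsRepresentableOver M K) :
    IsRepresentableOver M✶ K :=
  let ⟨_, _, _, φ, hφ⟩ := h
  ⟨_, _, _, dualRep K M φ, IsRep.dual hφ⟩

theorem IsRepresentableOver.restrict (h : IsRepresentableOver M K) {R : Set α} (hR : R ⊆ M.E) :
    IsRepresentableOver (M ↾ R) K :=
  let ⟨_, _, _, φ, hφ⟩ := h
  ⟨_, _, _, φ, IsRep.restrict hφ hR⟩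

theorem IsRepresentableOver.delete (h : IsRepresentableOver M K) (D : Set α) :
    IsRepresentableOver (M ＼ D) K :=
  h.restrict sdiff_subset

theorem IsRepresentableOver.contract [M.Finite] (h : IsRepresentableOver M K) (C : Set α) :
    IsRepresentableOver (M ／ C) K :=
  (h.dual.delete C).dual

theorem IsRepresentableOver.disjointSum (hM : IsRepresentableOver M K)
    (hN : IsRepresentableOver N K) (hdj : Disjoint M.E N.E) :
    IsRepresentableOver (M.disjointSum N hdj) K :=
  let ⟨_, _, _, φ, hφ⟩ := hM
  let ⟨_, _, _, ψ, hψ⟩ := hN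
  ⟨_, _, _, fun e => (M.E.indicator φ e, N.E.indicator ψ e), IsRep.disjointSum hφ hψ hdj⟩

def twistMin (M : Matroid α) (A : Set α) : Matroid α :=
  (M ／ A).disjointSum (M ↾ A)✶ disjoint_sdiff_left

theorem twistMin_ground (hA : A ⊆ M.E) : (twistMin M A).E = M.E :=
  disjointSum_ground_eq.trans (sdiff_union_of_subset hA)

theorem IsRepresentableOver.twistMin [M.Finite] (h : IsRepresentableOver M K) (hA : A ⊆ M.E) :
    IsRepresentableOver (twistMin M A) K :=
  have : (M ↾ A).Finite := ⟨M.ground_finite.subset hA⟩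
  (h.contract A).disjointSum (h.restrict hA).dual _

theorem minTwistMem_iff [M.Finite] (hA : A ⊆ M.E) :
    MinTwistMem M A F ↔ ∃ B, M.IsBase B ∧ M.IsBasis (A ∩ B) A ∧ F = A ∆ B := by
  have hAfin := M.ground_finite.subset hA
  constructor
  · rintro ⟨⟨B, hB, rfl⟩, hmin⟩
    refine ⟨B, hB, (hB.isBasis_inter_iff hA).2 fun B' hB' => ?_, rfl⟩
    exact (hB.ncard_symmDiff_le_iff hB' hAfin).1 (hmin _ ⟨B', hB', rfl⟩)
  · rintro ⟨B, hB, hAB, rfl⟩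
    refine ⟨⟨B, hB, rfl⟩, ?_⟩
    rintro _ ⟨B', hB', rfl⟩
    exact (hB.ncard_symmDiff_le_iff hB' hAfin).2 ((hB.isBasis_inter_iff hA).1 hAB B' hB')

theorem twistMin_isBase_iff [M.Finite] (hA : A ⊆ M.E) :
    (twistMin M A).IsBase F ↔ MinTwistMem M A F := by
  refine disjointSum_isBase_iff.trans ?_
  rw [minTwistMem_iff hA, dual_isBase_iff', dual_ground,
    restrict_ground_eq, isBase_restrict_iff hA, contract_ground]
  constructor
  · rintro ⟨hJ, ⟨hI, -⟩, hF⟩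
    refine ⟨_, (hI.contract_isBase_iff.1 hJ).1, ?_, ?_⟩
    · convert hI using 1
      ext x
      simp only [mem_inter_iff, mem_union, mem_sdiff]
      tauto
    · ext x
      have := @hF x
      simp only [mem_symmDiff, mem_inter_iff, mem_union, mem_sdiff] at this ⊢
      tauto
  · rintro ⟨B, hB, hAB, rfl⟩
    refine ⟨hAB.contract_isBase_iff.2 ⟨?_, ?_⟩, ⟨?_, inter_subset_right⟩, ?_⟩
    · convert hB using 1
      ext x
      have hBx : x ∈ B → x ∈ M.E := fun h => hB.subset_ground h
      simp only [mem_symmDiff, mem_inter_iff, mem_union, mem_sdiff]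
      tauto
    · exact disjoint_sdiff_left.mono_left inter_subset_right
    · convert hAB using 1
      ext x
      simp only [mem_symmDiff, mem_inter_iff, mem_sdiff]
      tauto
    · intro x
      have hBx : x ∈ B → x ∈ M.E := fun h => hB.subset_ground h
      have hAx : x ∈ A → x ∈ M.E := fun h => hA h
      simp only [mem_symmDiff, mem_union, mem_sdiff]
      tauto

theorem maxTwistMem_sdiff_iff [M.Finite] (hA : A ⊆ M.E) (hX : X ⊆ M.E) :
    MaxTwistMem M A (M.E \ X) ↔ MinTwistMem M (M.E \ A) X := by
  have hsymm {B} (hB : M.IsBase B) : A ∆ B ⊆ M.E :=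
    symmDiff_subset_union.trans (union_subset hA hB.subset_ground)
  have hcompl {B} (hB : M.IsBase B) : (M.E \ A) ∆ B = M.E \ (A ∆ B) := by
    ext x
    have hBx : x ∈ B → x ∈ M.E := fun h => hB.subset_ground h
    have hAx : x ∈ A → x ∈ M.E := fun h => hA h
    simp only [mem_symmDiff, mem_sdiff]
    tauto
  have hcard {Y} (hY : Y ⊆ M.E) : (M.E \ Y).ncard + Y.ncard = M.E.ncard :=
    ncard_sdiff_add_ncard_of_subset hY M.ground_finite
  have hfam : (∃ B, M.IsBase B ∧ M.E \ X = A ∆ B) ↔ ∃ B, M.IsBase B ∧ X = (M.E \ A) ∆ B := by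
    refine exists_congr fun B => and_congr_right fun hB => ?_
    rw [hcompl hB]
    constructor
    · intro h; rw [← h, sdiff_sdiff_cancel_left hX]
    · intro h; rw [h, sdiff_sdiff_cancel_left (hsymm hB)]
  simp only [MaxTwistMem, MinTwistMem, hfam, forall_exists_index, and_imp]
  refine and_congr_right fun _ => ⟨fun h F' B hB hF' => ?_, fun h F' B hB hF' => ?_⟩
  · have hle := h _ B hB rfl
    have hX' := hcard hX
    have hB' := hcard (hsymm hB)
    rw [hF', hcompl hB]
    omega
  · have hle := h _ B hB rfl
    have hX' := hcard hX
    have hB' := hcard (hsymm hB)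
    rw [hcompl hB] at hle
    rw [hF']
    omega

end Twist

/-- If `M` is representable over `K`, then so are `(M*A)_min` and `(M*A)_max`. -/
theorem twist_min_max_representable (M : Matroid α) [M.Finite] (K : Type) [Field K]
    (hM : IsRepresentableOver M K) (A : Set α) (hA : A ⊆ M.E) :
    (∀ N : Matroid α, N.E = M.E → (∀ B, N.IsBase B ↔ MinTwistMem M A B) →
      IsRepresentableOver N K) ∧
    (∀ N' : Matroid α, N'.E = M.E → (∀ B, N'.IsBase B ↔ MaxTwistMem M A B) →
      IsRepresentableOver N' K) := by
  refine ⟨fun N hNE hN => ?_, fun N' hNE hN' => ?_⟩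
  · have hN_eq : N = twistMin M A := ext_isBase (hNE.trans (twistMin_ground hA).symm)
      fun B _ => by rw [hN, twistMin_isBase_iff hA]
    exact hN_eq ▸ hM.twistMin hA
  · have hdual : N'✶ = twistMin M (M.E \ A) :=
      ext_isBase (hNE.trans (twistMin_ground sdiff_subset).symm) fun X hX => by
        rw [dual_ground, hNE] at hX
        rw [dual_isBase_iff, hN', hNE, maxTwistMem_sdiff_iff hA hX,
          twistMin_isBase_iff sdiff_subset]
    have : N'.Finite := ⟨hNE ▸ M.ground_finite⟩
    have hrep : IsRepresentableOver N'✶ K := hdual ▸ hM.twistMin sdiff_subset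
    simpa using hrep.dual

end PaperMatroid
end

section
/- Let D = (E,𝓕) be a vf-safe delta-matroid with dual D* := D*E, and let e ∈ E. Then: (1) e is a non-trivial orientable ribbon loop of D* if and only if e is a non-trivial orientable ribbon loop of (D+e)*; (2) e is a trivial orientable ribbon loop of D* if and only if e is a trivial orientable ribbon loop of (D+e)*; (3) e is a coloop of D* if and only if e is a trivial non-orientable ribbon loop of (D+e)*; and (4) e is neither a ribbon loop nor a coloop of D* if and only if e is a non-trivial non-orientable ribbon loop of (D+e)*. -/
open scoped symmDiff

structure SetSystem (α : Type) [DecidableEq α] where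
  E : Finset α
  F : Finset (Finset α)

namespace SetSystem

variable {α : Type} [DecidableEq α]

/-- A delta-matroid: nonempty collection of feasible subsets of the ground set
satisfying the symmetric exchange axiom. -/
def IsDeltaMatroid (D : SetSystem α) : Prop :=
  D.F.Nonempty ∧ (∀ F ∈ D.F, F ⊆ D.E) ∧
    ∀ X ∈ D.F, ∀ Y ∈ D.F, ∀ u ∈ X ∆ Y, ∃ v ∈ X ∆ Y, X ∆ ({u, v} : Finset α) ∈ D.F

/-- A matroid, viewed as a delta-matroid whose feasible sets are equicardinal. -/
def IsMatroid (D : SetSystem α) : Prop :=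
  D.IsDeltaMatroid ∧ ∀ F₁ ∈ D.F, ∀ F₂ ∈ D.F, F₁.card = F₂.card

/-- The twist `D*A`. -/
def twist (D : SetSystem α) (A : Finset α) : SetSystem α :=
  ⟨D.E, D.F.image fun F => A ∆ F⟩

/-- The dual `D* := D * E`. -/
def dual (D : SetSystem α) : SetSystem α := D.twist D.E

def IsLoop (D : SetSystem α) (e : α) : Prop := ∀ F ∈ D.F, e ∉ F

def IsColoop (D : SetSystem α) (e : α) : Prop := ∀ F ∈ D.F, e ∈ F

open Classical in
/-- Deletion of a single element (when `e` is a coloop, `D∖e := D/e`). -/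
noncomputable def del (D : SetSystem α) (e : α) : SetSystem α :=
  if D.IsColoop e then ⟨D.E.erase e, D.F.image fun F => F.erase e⟩
  else ⟨D.E.erase e, D.F.filter fun F => e ∉ F⟩

open Classical in
/-- Contraction of a single element (when `e` is a loop, `D/e := D∖e`). -/
noncomputable def con (D : SetSystem α) (e : α) : SetSystem α :=
  if D.IsLoop e then ⟨D.E.erase e, D.F.filter fun F => e ∉ F⟩
  else ⟨D.E.erase e, (D.F.filter fun F => e ∈ F).image fun F => F.erase e⟩

/-- Loop complementation on a single element. -/
def lc (D : SetSystem α) (e : α) : SetSystem α :=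
  ⟨D.E, D.F ∆ ((D.F.filter fun F => e ∉ F).image fun F => insert e F)⟩

/-- Loop complementation on a set of elements (applied in some order;
the operation is order-independent). -/
noncomputable def lcSet (D : SetSystem α) (A : Finset α) : SetSystem α :=
  A.toList.foldl lc D

/-- The dual pivot `D *̄ A := ((D*A)+A)*A`. -/
noncomputable def dpivot (D : SetSystem α) (A : Finset α) : SetSystem α :=
  ((D.twist A).lcSet A).twist A

/-- Set systems reachable from `D` by sequences of twists and loop complementations. -/
inductive Reachable : SetSystem α → SetSystem α → Prop
  | refl (D : SetSystem α) : Reachable D D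
  | twist (D D' : SetSystem α) (A : Finset α) (hA : A ⊆ D'.E) :
      Reachable D D' → Reachable D (D'.twist A)
  | lc (D D' : SetSystem α) (A : Finset α) (hA : A ⊆ D'.E) :
      Reachable D D' → Reachable D (D'.lcSet A)

/-- A vf-safe delta-matroid: any sequence of twists and loop complementations
yields a delta-matroid. -/
def VfSafe (D : SetSystem α) : Prop := ∀ D', Reachable D D' → D'.IsDeltaMatroid

/-- The minimum-cardinality feasible sets. -/
def Fmin (D : SetSystem α) : Finset (Finset α) :=
  D.F.filter fun F => ∀ F' ∈ D.F, F.card ≤ F'.card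

/-- The maximum-cardinality feasible sets. -/
def Fmax (D : SetSystem α) : Finset (Finset α) :=
  D.F.filter fun F => ∀ F' ∈ D.F, F'.card ≤ F.card

/-- The lower matroid `D_min`. -/
def Dmin (D : SetSystem α) : SetSystem α := ⟨D.E, D.Fmin⟩

def IsRibbonLoop (D : SetSystem α) (e : α) : Prop := ∀ F ∈ D.Fmin, e ∉ F

def IsNonorientableRL (D : SetSystem α) (e : α) : Prop :=
  D.IsRibbonLoop e ∧ (D.twist {e}).IsRibbonLoop e

def IsOrientableRL (D : SetSystem α) (e : α) : Prop :=
  D.IsRibbonLoop e ∧ (D.dpivot {e}).IsRibbonLoop e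

def IsTrivialOrientableRL (D : SetSystem α) (e : α) : Prop :=
  D.IsOrientableRL e ∧ D.IsLoop e

def IsTrivialNonorientableRL (D : SetSystem α) (e : α) : Prop :=
  D.IsNonorientableRL e ∧ (D.lc e).IsLoop e


/-!
Write `S := D*`. As `e ∈ E`, dualising turns the loop complementation at `e` into the dual pivot:
`(D+e)* = S *̄ e`. The dual pivot at `e` is an involution that keeps the feasible sets containing
`e`, so (1) and (2) are symmetric in `S` and `S *̄ e`; and a set `K ∋ e` is feasible in
`(S *̄ e)+e` iff `K - e` is feasible in `S`, so `e` is a loop there iff it is a coloop of `S`.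

The substance is that `e` is a non-orientable ribbon loop of `S *̄ e` iff it is not a ribbon loop
of `S`. If a minimum feasible set `M` of `S` contains `e`, then `M - e` is a minimum of both
`S *̄ e` and `(S *̄ e)*e`. Conversely, let `e` be a ribbon loop of `S`, with minimum feasible set
`H`. If some feasible set of size `|H| + 1` contains `e`, the symmetric exchange axiom in `S` and
in `S*e` shows that it is a minimum of `S *̄ e`; otherwise `H + e` is a minimum of `(S *̄ e)*e`.
-/

open Finset

theorem _root_.Finset.singleton_symmDiff_of_mem {e : α} {K : Finset α} (h : e ∈ K) :
    {e} ∆ K = K.erase e := by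
  ext x
  by_cases hx : x = e <;> simp [mem_symmDiff, hx, h]

theorem _root_.Finset.singleton_symmDiff_of_notMem {e : α} {K : Finset α} (h : e ∉ K) :
    {e} ∆ K = insert e K := by
  ext x
  by_cases hx : x = e <;> simp [mem_symmDiff, hx, h]

theorem _root_.Finset.symmDiff_pair_of_mem_of_notMem {u v : α} {M : Finset α} (hu : u ∈ M)
    (hv : v ∉ M) : M ∆ {u, v} = insert v (M.erase u) := by
  ext x
  by_cases hxu : x = u <;> by_cases hxv : x = v <;> simp_all [mem_symmDiff]

protected theorem ext {S T : SetSystem α} (hE : S.E = T.E) (hF : ∀ K, K ∈ S.F ↔ K ∈ T.F) :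
    S = T := by
  obtain ⟨E, F⟩ := S
  obtain ⟨E', F'⟩ := T
  cases hE
  cases Finset.ext hF
  rfl

variable {D S : SetSystem α} {e : α} {A H K M : Finset α}

theorem mem_twist : K ∈ (D.twist A).F ↔ A ∆ K ∈ D.F := by
  simp only [twist, mem_image]
  constructor
  · rintro ⟨F, hF, rfl⟩
    rwa [symmDiff_symmDiff_cancel_left]
  · exact fun h => ⟨A ∆ K, h, symmDiff_symmDiff_cancel_left A K⟩

theorem mem_twist_singleton_of_mem (h : e ∈ K) : K ∈ (S.twist {e}).F ↔ K.erase e ∈ S.F := by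
  rw [mem_twist, singleton_symmDiff_of_mem h]

theorem mem_twist_singleton_of_notMem (h : e ∉ K) :
    K ∈ (S.twist {e}).F ↔ insert e K ∈ S.F := by
  rw [mem_twist, singleton_symmDiff_of_notMem h]

theorem mem_lc : K ∈ (D.lc e).F ↔ Xor (K ∈ D.F) (e ∈ K ∧ K.erase e ∈ D.F) := by
  have : K ∈ (D.F.filter (e ∉ ·)).image (insert e) ↔ e ∈ K ∧ K.erase e ∈ D.F := by
    simp only [mem_image, mem_filter]
    constructor
    · rintro ⟨F, ⟨hF, heF⟩, rfl⟩
      exact ⟨mem_insert_self e F, by rwa [erase_insert heF]⟩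
    · rintro ⟨heK, hK⟩
      exact ⟨K.erase e, ⟨hK, notMem_erase e K⟩, insert_erase heK⟩
  rw [lc, mem_symmDiff, this, xor_def]

theorem lcSet_singleton : D.lcSet {e} = D.lc e := by
  simp [lcSet]

theorem mem_dpivot_singleton :
    K ∈ (S.dpivot {e}).F ↔ Xor (K ∈ S.F) (e ∉ K ∧ insert e K ∈ S.F) := by
  rw [dpivot, lcSet_singleton, mem_twist, mem_lc, mem_twist, mem_twist]
  by_cases h : e ∈ K
  · simp [singleton_symmDiff_of_mem h, singleton_symmDiff_of_notMem (notMem_erase e K),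
      insert_erase h, h]
  · simp [singleton_symmDiff_of_notMem h, singleton_symmDiff_of_mem (mem_insert_self e K),
      erase_insert h, h]

theorem mem_dpivot_singleton_of_mem (h : e ∈ K) : K ∈ (S.dpivot {e}).F ↔ K ∈ S.F := by
  simp [mem_dpivot_singleton, h, xor_def]

theorem mem_dpivot_singleton_of_notMem (h : e ∉ K) :
    K ∈ (S.dpivot {e}).F ↔ Xor (K ∈ S.F) (insert e K ∈ S.F) := by
  simp [mem_dpivot_singleton, h, xor_def]

theorem dpivot_singleton_dpivot_singleton : (S.dpivot {e}).dpivot {e} = S := by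
  refine SetSystem.ext (by simp [dpivot, lcSet_singleton, twist, lc]) fun K => ?_
  by_cases h : e ∈ K
  · rw [mem_dpivot_singleton_of_mem h, mem_dpivot_singleton_of_mem h]
  · rw [mem_dpivot_singleton_of_notMem h, mem_dpivot_singleton_of_notMem h,
      mem_dpivot_singleton_of_mem (mem_insert_self e K)]
    grind

theorem lc_twist_eq_twist_dpivot (he : e ∈ A) : (D.lc e).twist A = (D.twist A).dpivot {e} := by
  refine SetSystem.ext (by simp [dpivot, lcSet_singleton, twist, lc]) fun K => ?_
  rw [mem_twist, mem_lc, mem_dpivot_singleton, mem_twist, mem_twist]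
  by_cases h : e ∈ K
  · simp [mem_symmDiff, he, h]
  · have : (A ∆ K).erase e = A ∆ insert e K := by
      ext x
      by_cases hx : x = e <;> simp [mem_symmDiff, hx, he, h]
    simp [mem_symmDiff, he, h, this]

theorem isLoop_dpivot_singleton : (S.dpivot {e}).IsLoop e ↔ S.IsLoop e :=
  forall_congr' fun K => by
    by_cases h : e ∈ K
    · rw [mem_dpivot_singleton_of_mem h]
    · simp [h]

theorem mem_lc_dpivot_singleton_of_mem (h : e ∈ K) :
    K ∈ ((S.dpivot {e}).lc e).F ↔ K.erase e ∈ S.F := by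
  rw [mem_lc, mem_dpivot_singleton_of_mem h,
    mem_dpivot_singleton_of_notMem (notMem_erase e K), insert_erase h]
  grind

theorem isLoop_lc_dpivot_singleton : ((S.dpivot {e}).lc e).IsLoop e ↔ S.IsColoop e := by
  constructor
  · intro h F hF
    by_contra heF
    refine h (insert e F) ?_ (mem_insert_self e F)
    rwa [mem_lc_dpivot_singleton_of_mem (mem_insert_self e F), erase_insert heF]
  · intro h K hK heK
    exact notMem_erase e K (h _ ((mem_lc_dpivot_singleton_of_mem heK).1 hK))

theorem isOrientableRL_dpivot_singleton :
    (S.dpivot {e}).IsOrientableRL e ↔ S.IsOrientableRL e := by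
  rw [IsOrientableRL, IsOrientableRL, dpivot_singleton_dpivot_singleton, and_comm]

theorem not_isRibbonLoop_of_isColoop (hS : S.F.Nonempty) (h : S.IsColoop e) :
    ¬S.IsRibbonLoop e := by
  obtain ⟨K, hK, hKmin⟩ := S.F.exists_min_image card hS
  exact fun hRL => hRL K (mem_filter.2 ⟨hK, hKmin⟩) (h K hK)

theorem isRibbonLoop_of_card_lt (hK : K ∈ S.F) (h : ∀ M ∈ S.F, e ∈ M → #K < #M) :
    S.IsRibbonLoop e := fun M hM heM =>
  (h M (mem_filter.1 hM).1 heM).not_ge ((mem_filter.1 hM).2 K hK)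

theorem IsRibbonLoop.card_lt (hRL : S.IsRibbonLoop e)
    (hHmin : ∀ G ∈ S.F, #H ≤ #G) (hK : K ∈ S.F) (heK : e ∈ K) : #H < #K := by
  by_contra! hKH
  exact hRL K (mem_filter.2 ⟨hK, fun G hG => hKH.trans (hHmin G hG)⟩) heK

theorem isNonorientableRL_dpivot_singleton_of_not_isRibbonLoop (h : ¬S.IsRibbonLoop e) :
    (S.dpivot {e}).IsNonorientableRL e := by
  obtain ⟨M, hMmin, heM⟩ : ∃ M ∈ S.Fmin, e ∈ M := by
    simpa [IsRibbonLoop] using h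
  obtain ⟨hM, hMmin⟩ := mem_filter.1 hMmin
  have hcard : #(M.erase e) < #M := card_erase_lt_of_mem heM
  have hMe : M.erase e ∉ S.F := fun h => (hMmin _ h).not_gt hcard
  constructor
  · refine isRibbonLoop_of_card_lt (K := M.erase e) ?_ fun K hK heK => ?_
    · rw [mem_dpivot_singleton_of_notMem (notMem_erase e M), insert_erase heM]
      exact Or.inr ⟨hM, hMe⟩
    · exact hcard.trans_le (hMmin K ((mem_dpivot_singleton_of_mem heK).1 hK))
  · refine isRibbonLoop_of_card_lt (K := M.erase e) ?_ fun K hK heK => ?_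
    · rwa [mem_twist_singleton_of_notMem (notMem_erase e M), insert_erase heM,
        mem_dpivot_singleton_of_mem heM]
    · rw [mem_twist_singleton_of_mem heK,
        mem_dpivot_singleton_of_notMem (notMem_erase e K), insert_erase heK] at hK
      rcases hK with ⟨hK, -⟩ | ⟨hK, -⟩
      · have := hMmin _ hK
        have := card_erase_add_one heK
        omega
      · exact hcard.trans_le (hMmin K hK)

-- Exchanging `u ∈ M \ (H + e)` against `H` can only trade `u` for an element of `H`: any other
-- exchange leaves a feasible set that is too small. Such trades move `M` towards `H + e`.
theorem IsDeltaMatroid.insert_mem (hD : D.IsDeltaMatroid) {e : α} {H M : Finset α}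
    (hH : H ∈ D.F) (heH : e ∉ H) (hHmin : ∀ G ∈ D.F, #H ≤ #G)
    (hHe : ∀ G ∈ D.F, e ∈ G → #H < #G) (hM : M ∈ D.F) (heM : e ∈ M)
    (hMc : #M = #H + 1) : insert e H ∈ D.F := by
  obtain hsub | ⟨u, hu⟩ := (M \ insert e H).eq_empty_or_nonempty
  · have hcard : #(insert e H) ≤ #M := by rw [card_insert_of_notMem heH, hMc]
    rwa [← eq_of_subset_of_card_le (sdiff_eq_empty_iff_subset.1 hsub) hcard]
  obtain ⟨huM, hueH⟩ := mem_sdiff.1 hu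
  have hue : u ≠ e := fun h => hueH (h ▸ mem_insert_self e H)
  have huH : u ∉ H := fun h => hueH (mem_insert_of_mem h)
  obtain ⟨v, hv, hMuv⟩ := hD.2.2 M hM H hH u (mem_symmDiff.2 (Or.inl ⟨huM, huH⟩))
  rcases mem_symmDiff.1 hv with ⟨hvM, -⟩ | ⟨hvH, hvM⟩
  · exfalso
    have huvM : {u, v} ⊆ M := insert_subset huM (singleton_subset_iff.2 hvM)
    rw [symmDiff_of_ge huvM] at hMuv
    obtain rfl | hvu := eq_or_ne v u
    · have h := hHe _ hMuv (by simp [hue.symm, heM])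
      rw [pair_eq_singleton, sdiff_singleton_eq_erase, card_erase_of_mem huM, hMc,
        Nat.add_sub_cancel] at h
      exact h.false
    · have h := hHmin _ hMuv
      have h2 := card_le_card huvM
      rw [card_sdiff_of_subset huvM, card_pair hvu.symm] at h
      rw [card_pair hvu.symm] at h2
      omega
  · rw [symmDiff_pair_of_mem_of_notMem huM hvM] at hMuv
    have hdiff : insert v (M.erase u) \ insert e H = (M \ insert e H).erase u := by
      ext x
      by_cases hxv : x = v <;> simp [hxv, hvH, and_comm, and_left_comm]
    have : #(insert v (M.erase u) \ insert e H) < #(M \ insert e H) := by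
      rw [hdiff]
      exact card_erase_lt_of_mem hu
    refine hD.insert_mem hH heH hHmin hHe hMuv
      (mem_insert_of_mem (mem_erase.2 ⟨hue.symm, heM⟩)) ?_
    rw [card_insert_of_notMem (fun h => hvM (mem_of_mem_erase h)), card_erase_add_one huM, hMc]
termination_by #(M \ insert e H)

theorem IsRibbonLoop.card_le_of_mem_twist (hRL : S.IsRibbonLoop e)
    (hHmin : ∀ G ∈ S.F, #H ≤ #G) (hK : K ∈ (S.twist {e}).F) : #H ≤ #K := by
  by_cases heK : e ∈ K
  · have := hHmin _ ((mem_twist_singleton_of_mem heK).1 hK)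
    have := card_erase_add_one heK
    omega
  · have := hRL.card_lt hHmin ((mem_twist_singleton_of_notMem heK).1 hK) (mem_insert_self e K)
    rw [card_insert_of_notMem heK] at this
    omega

theorem card_lt_of_mem_twist_singleton (hHmin : ∀ G ∈ S.F, #H ≤ #G)
    (hK : K ∈ (S.twist {e}).F) (heK : e ∈ K) : #H < #K := by
  have := hHmin _ ((mem_twist_singleton_of_mem heK).1 hK)
  have := card_erase_add_one heK
  omega

theorem IsRibbonLoop.card_lt_of_mem_dpivot (hS : S.IsDeltaMatroid)
    (hSe : (S.twist {e}).IsDeltaMatroid) (hRL : S.IsRibbonLoop e) (hH : H ∈ S.F)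
    (hHmin : ∀ G ∈ S.F, #H ≤ #G) (hM : M ∈ S.F) (heM : e ∈ M) (hMc : #M = #H + 1)
    (hK : K ∈ (S.dpivot {e}).F) (heK : e ∉ K) : #H < #K := by
  rcases (mem_dpivot_singleton_of_notMem heK).1 hK with ⟨hK, hKe⟩ | ⟨hKe, hK⟩
  · refine (hHmin K hK).lt_of_ne fun hKc => hKe ?_
    exact hS.insert_mem hK heK (hKc ▸ hHmin) (hKc ▸ fun G => hRL.card_lt hHmin) hM heM
      (hKc ▸ hMc)
  · have hKe' : K ∈ (S.twist {e}).F := (mem_twist_singleton_of_notMem heK).2 hKe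
    refine (hRL.card_le_of_mem_twist hHmin hKe').lt_of_ne fun hKc => hK ?_
    have heH : e ∉ H := hRL H (mem_filter.2 ⟨hH, hHmin⟩)
    have hHe : insert e H ∈ (S.twist {e}).F := by
      rwa [mem_twist_singleton_of_mem (mem_insert_self e H), erase_insert heH]
    have := hSe.insert_mem hKe' heK (hKc ▸ fun G => hRL.card_le_of_mem_twist hHmin)
      (hKc ▸ fun G hG => card_lt_of_mem_twist_singleton hHmin hG) hHe (mem_insert_self e H)
      (by rw [card_insert_of_notMem heH, hKc])
    rwa [mem_twist_singleton_of_mem (mem_insert_self e K), erase_insert heK] at this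

theorem not_isRibbonLoop_twist_dpivot_singleton (hH : H ∈ S.F) (heH : e ∉ H)
    (hHmin : ∀ G ∈ S.F, #H ≤ #G) (hbig : ∀ K ∈ S.F, e ∈ K → #H + 1 < #K) :
    ¬((S.dpivot {e}).twist {e}).IsRibbonLoop e := by
  have hcard : #(insert e H) = #H + 1 := card_insert_of_notMem heH
  have hHe : insert e H ∈ ((S.dpivot {e}).twist {e}).F := by
    rw [mem_twist_singleton_of_mem (mem_insert_self e H), erase_insert heH,
      mem_dpivot_singleton_of_notMem heH]
    exact Or.inl ⟨hH, fun h => (hbig _ h (mem_insert_self e H)).ne' hcard⟩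
  refine fun hRL => hRL _ (mem_filter.2 ⟨hHe, fun K hK => ?_⟩) (mem_insert_self e H)
  rw [hcard]
  by_cases heK : e ∈ K
  · rw [mem_twist_singleton_of_mem heK, mem_dpivot_singleton_of_notMem (notMem_erase e K),
      insert_erase heK] at hK
    rcases hK with ⟨hK, -⟩ | ⟨hK, -⟩
    · have := hHmin _ hK
      have := card_erase_add_one heK
      omega
    · exact (hbig K hK heK).le
  · rw [mem_twist_singleton_of_notMem heK,
      mem_dpivot_singleton_of_mem (mem_insert_self e K)] at hK
    have := hbig _ hK (mem_insert_self e K)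
    rw [card_insert_of_notMem heK] at this
    omega

theorem IsRibbonLoop.not_isNonorientableRL_dpivot_singleton (hS : S.IsDeltaMatroid)
    (hSe : (S.twist {e}).IsDeltaMatroid) (hRL : S.IsRibbonLoop e) :
    ¬(S.dpivot {e}).IsNonorientableRL e := by
  rintro ⟨hG, hGe⟩
  obtain ⟨H, hH, hHmin⟩ := S.F.exists_min_image card hS.1
  by_cases hM : ∃ M ∈ S.F, e ∈ M ∧ #M = #H + 1
  · obtain ⟨M, hM, heM, hMc⟩ := hM
    refine hG M (mem_filter.2 ⟨(mem_dpivot_singleton_of_mem heM).2 hM, fun K hK => ?_⟩) heM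
    rw [hMc, Nat.add_one_le_iff]
    by_cases heK : e ∈ K
    · exact hRL.card_lt hHmin ((mem_dpivot_singleton_of_mem heK).1 hK) heK
    · exact hRL.card_lt_of_mem_dpivot hS hSe hH hHmin hM heM hMc hK heK
  · refine not_isRibbonLoop_twist_dpivot_singleton hH (hRL H (mem_filter.2 ⟨hH, hHmin⟩)) hHmin
      (fun K hK heK => ?_) hGe
    have := hRL.card_lt hHmin hK heK
    have : #K ≠ #H + 1 := fun h => hM ⟨K, hK, heK, h⟩
    omega

theorem isNonorientableRL_dpivot_singleton_iff (hS : S.IsDeltaMatroid)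
    (hSe : (S.twist {e}).IsDeltaMatroid) :
    (S.dpivot {e}).IsNonorientableRL e ↔ ¬S.IsRibbonLoop e :=
  ⟨fun h hRL => hRL.not_isNonorientableRL_dpivot_singleton hS hSe h,
    isNonorientableRL_dpivot_singleton_of_not_isRibbonLoop⟩

/-- Behaviour of the element `e` in `D*` versus `(D+e)*`. -/
theorem dual_lc_ribbon_loops (D : SetSystem α) (hD : D.VfSafe) (e : α) (he : e ∈ D.E) :
    ((D.dual.IsOrientableRL e ∧ ¬ D.dual.IsLoop e) ↔
      ((D.lc e).dual.IsOrientableRL e ∧ ¬ (D.lc e).dual.IsLoop e)) ∧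
    (D.dual.IsTrivialOrientableRL e ↔ (D.lc e).dual.IsTrivialOrientableRL e) ∧
    (D.dual.IsColoop e ↔ (D.lc e).dual.IsTrivialNonorientableRL e) ∧
    ((¬ D.dual.IsRibbonLoop e ∧ ¬ D.dual.IsColoop e) ↔
      ((D.lc e).dual.IsNonorientableRL e ∧ ¬ ((D.lc e).dual.lc e).IsLoop e)) := by
  have hdual : Reachable D D.dual := .twist D D D.E subset_rfl (.refl D)
  have hS : D.dual.IsDeltaMatroid := hD _ hdual
  have hSe : (D.dual.twist {e}).IsDeltaMatroid :=
    hD _ (.twist D D.dual {e} (singleton_subset_iff.2 he) hdual)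
  have hColoop : D.dual.IsColoop e → ¬D.dual.IsRibbonLoop e := not_isRibbonLoop_of_isColoop hS.1
  rw [show (D.lc e).dual = D.dual.dpivot {e} from lc_twist_eq_twist_dpivot he]
  simp only [IsTrivialOrientableRL, IsTrivialNonorientableRL, isOrientableRL_dpivot_singleton,
    isLoop_dpivot_singleton, isLoop_lc_dpivot_singleton,
    isNonorientableRL_dpivot_singleton_iff hS hSe]
  tauto

end SetSystem
end
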